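/- arXiv:math/9812123 — 2 statements merged into one kernel-verified Lean document; each statement's English description precedes it below -/
import Mathlib

section
/- For every real number k > 0, ∫_0^∞ e^{-k t²} Φ(t) dt = (1/√(πk)) · arctan(1/√k), where Φ(t) = (2/√π) ∫_0^t e^{-x²} dx. -/
open MeasureTheory Real

noncomputable section

/-- The Gauss error function `Φ(t) = (2/√π) ∫₀^t e^{-x²} dx`. -/
def errFun (t : ℝ) : ℝ := (2 / Real.sqrt π) * ∫ x in (0 : ℝ)..t, Real.exp (-x ^ 2)

lemma integral_Ioi_mul_exp_neg_mul_sq {b : ℝ} (hb : 0 < b) :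
    ∫ r in Set.Ioi (0 : ℝ), r * Real.exp (-b * r ^ 2) = (2 * b)⁻¹ := by
  have hb' : 0 < (b : ℂ).re := by simpa using hb
  have h := integral_mul_cexp_neg_mul_sq hb'
  have h2 : ((∫ r in Set.Ioi (0 : ℝ), r * Real.exp (-b * r ^ 2) : ℝ) : ℂ)
      = (2 * (b : ℂ))⁻¹ := by
    rw [← h]
    have hcg : ∫ r in Set.Ioi (0:ℝ), (r:ℂ) * Complex.exp (-(b:ℂ) * (r:ℂ) ^ 2)
        = ∫ r in Set.Ioi (0:ℝ), ((r * Real.exp (-b * r ^ 2) : ℝ) : ℂ) := by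
      refine setIntegral_congr_fun measurableSet_Ioi fun r _ => ?_
      push_cast [Complex.ofReal_exp]
      ring_nf
    rw [hcg]
    exact (integral_ofReal).symm
  have h3 : ((2 * b)⁻¹ : ℂ) = ((2 * b : ℝ)⁻¹ : ℝ) := by push_cast; ring
  rw [h3] at h2
  exact_mod_cast h2

/-- for `k > 0`, `∫₀^∞ e^{-kt²} Φ(t) dt = (1/√(πk)) arctan(1/√k)`. -/
theorem integral_exp_mul_errFun (k : ℝ) (hk : 0 < k) :
    ∫ t in Set.Ioi (0 : ℝ), Real.exp (-k * t ^ 2) * errFun t =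
      (1 / Real.sqrt (π * k)) * Real.arctan (1 / Real.sqrt k) := by
  -- Step 1: rewrite integrand using substitution x = t s
  have step1 : ∀ t ∈ Set.Ioi (0 : ℝ),
      Real.exp (-k * t ^ 2) * errFun t
        = (2 / Real.sqrt π) *
            ∫ s in Set.Ioc (0 : ℝ) 1, t * Real.exp (-(k + s ^ 2) * t ^ 2) := by
    intro t ht
    have ht0 : (0 : ℝ) < t := ht
    have hsub : ∫ s in (0 : ℝ)..1, Real.exp (-(t * s) ^ 2)
        = t⁻¹ • ∫ x in (t * 0)..(t * 1), Real.exp (-x ^ 2) :=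
      intervalIntegral.integral_comp_mul_left (fun x => Real.exp (-x ^ 2)) ht0.ne'
    have hΦ : ∫ x in (0 : ℝ)..t, Real.exp (-x ^ 2)
        = t * ∫ s in (0 : ℝ)..1, Real.exp (-(t * s) ^ 2) := by
      rw [hsub]; simp [smul_eq_mul, ← mul_assoc, mul_inv_cancel₀ ht0.ne']
    have hset : ∫ s in Set.Ioc (0 : ℝ) 1, t * Real.exp (-(k + s ^ 2) * t ^ 2)
        = ∫ s in (0 : ℝ)..1, t * Real.exp (-(k + s ^ 2) * t ^ 2) := by
      rw [intervalIntegral.integral_of_le (by norm_num : (0:ℝ) ≤ 1)]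
    rw [errFun, hΦ, hset]
    have : ∀ s : ℝ, Real.exp (-k * t ^ 2) * t * Real.exp (-(t * s) ^ 2)
        = t * Real.exp (-(k + s ^ 2) * t ^ 2) := by
      intro s
      rw [mul_comm (Real.exp (-k * t ^ 2)) t, mul_assoc, ← Real.exp_add]
      ring_nf
    calc Real.exp (-k * t ^ 2) *
          ((2 / Real.sqrt π) * (t * ∫ s in (0:ℝ)..1, Real.exp (-(t * s) ^ 2)))
        = (2 / Real.sqrt π) *
            ∫ s in (0:ℝ)..1, Real.exp (-k * t ^ 2) * t * Real.exp (-(t * s) ^ 2) := by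
          rw [intervalIntegral.integral_const_mul (Real.exp (-k * t ^ 2) * t)]
          ring
      _ = (2 / Real.sqrt π) *
            ∫ s in (0:ℝ)..1, t * Real.exp (-(k + s ^ 2) * t ^ 2) := by
          congr 1; exact intervalIntegral.integral_congr fun s _ => this s
  rw [setIntegral_congr_fun measurableSet_Ioi step1, integral_const_mul]
  -- Step 2: Fubini
  have hint : Integrable (Function.uncurry fun (t s : ℝ) =>
      t * Real.exp (-(k + s ^ 2) * t ^ 2))
      ((volume.restrict (Set.Ioi (0:ℝ))).prod (volume.restrict (Set.Ioc (0:ℝ) 1))) := by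
    have hg : Integrable (fun p : ℝ × ℝ => |p.1 * Real.exp (-k * p.1 ^ 2)| * 1)
        ((volume.restrict (Set.Ioi (0:ℝ))).prod (volume.restrict (Set.Ioc (0:ℝ) 1))) :=
      Integrable.mul_prod ((integrable_mul_exp_neg_mul_sq hk).abs.restrict)
        (integrable_const 1)
    refine Integrable.mono' hg ?_ ?_
    · apply Continuous.aestronglyMeasurable
      have : Continuous fun p : ℝ × ℝ => p.1 * Real.exp (-(k + p.2 ^ 2) * p.1 ^ 2) := by
        fun_prop
      exact this
    · filter_upwards with p
      rcases p with ⟨t, s⟩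
      simp only [Function.uncurry, mul_one, Real.norm_eq_abs]
      rw [abs_mul, abs_mul, Real.abs_exp, Real.abs_exp]
      gcongr
      nlinarith [sq_nonneg s, sq_nonneg t]
  rw [integral_integral_swap hint]
  -- Step 3: compute the inner integral in t
  have step3 : ∀ s ∈ Set.Ioc (0:ℝ) 1,
      (∫ t in Set.Ioi (0:ℝ), t * Real.exp (-(k + s ^ 2) * t ^ 2))
        = (2 * (k + s ^ 2))⁻¹ := fun s _ =>
    integral_Ioi_mul_exp_neg_mul_sq (by positivity)
  rw [setIntegral_congr_fun measurableSet_Ioc step3]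
  -- Step 4: compute the integral in s
  have hIoc : ∫ s in Set.Ioc (0:ℝ) 1, (2 * (k + s ^ 2))⁻¹
      = ∫ s in (0:ℝ)..1, (2 * (k + s ^ 2))⁻¹ := by
    rw [intervalIntegral.integral_of_le (by norm_num : (0:ℝ) ≤ 1)]
  rw [hIoc]
  have hsk : (0 : ℝ) < Real.sqrt k := Real.sqrt_pos.mpr hk
  have hsq : Real.sqrt k * Real.sqrt k = k := Real.mul_self_sqrt hk.le
  have hcongr : ∀ s : ℝ, (2 * (k + s ^ 2))⁻¹
      = (2 * k)⁻¹ * (1 + (s / Real.sqrt k) ^ 2)⁻¹ := by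
    intro s
    rw [← mul_inv]
    congr 1
    have h1 : (s / Real.sqrt k) ^ 2 = s ^ 2 / k := by
      rw [div_pow, Real.sq_sqrt hk.le]
    rw [h1]
    field_simp
  have : (∫ s in (0:ℝ)..1, (2 * (k + s ^ 2))⁻¹)
      = (2 * k)⁻¹ * ∫ s in (0:ℝ)..1, (1 + (s / Real.sqrt k) ^ 2)⁻¹ := by
    rw [← intervalIntegral.integral_const_mul]
    exact intervalIntegral.integral_congr fun s _ => hcongr s
  rw [this]
  have hcd : ∫ s in (0:ℝ)..1, (1 + (s / Real.sqrt k) ^ 2)⁻¹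
      = Real.sqrt k • ∫ u in (0 / Real.sqrt k)..(1 / Real.sqrt k), (1 + u ^ 2)⁻¹ :=
    intervalIntegral.integral_comp_div (fun u => (1 + u ^ 2)⁻¹) hsk.ne'
  rw [hcd]
  simp only [zero_div, integral_inv_one_add_sq, Real.arctan_zero, sub_zero, smul_eq_mul]
  rw [Real.sqrt_mul pi_pos.le]
  have hπ : (0:ℝ) < Real.sqrt π := Real.sqrt_pos.mpr pi_pos
  set a := Real.sqrt k with ha
  have hk' : k = a * a := hsq.symm
  rw [hk']
  field_simp
end
end

section
/- Let m ≥ 1 be an integer, τ > 0, and let c_1, …, c_m be real numbers with 0 < c_i ≤ 1 for each i and ∑_{i=1}^m c_i = j > 0. Then ∏_{i=1}^m (√(2/π) ∫_0^{τ/√(c_i)} e^{-s²/2} ds)^{c_i} ≤ (√(2/π) ∫_0^{τ√(m/j)} e^{-s²/2} ds)^j; that is, subject to ∑ c_i = j the product is maximized when all the c_i are equal to j/m. -/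
open MeasureTheory Real

noncomputable section

namespace PG16

lemma cont_gauss : Continuous fun s : ℝ => Real.exp (-s ^ 2 / 2) := by
  continuity

lemma intble (a b : ℝ) : IntervalIntegrable (fun s : ℝ => Real.exp (-s ^ 2 / 2)) volume a b :=
  cont_gauss.intervalIntegrable a b

def Phi (t : ℝ) : ℝ := Real.sqrt (2 / π) * ∫ s in (0 : ℝ)..t, Real.exp (-s ^ 2 / 2)

def p (u : ℝ) : ℝ := Real.sqrt (2 / π) * Real.exp (-u ^ 2 / 2)

lemma p_pos (u : ℝ) : 0 < p u := by
  have : (0:ℝ) < 2 / π := by positivity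
  exact mul_pos (Real.sqrt_pos.2 this) (Real.exp_pos _)

lemma hasDerivAt_Phi (t : ℝ) : HasDerivAt Phi (p t) t :=
  (intervalIntegral.integral_hasDerivAt_right (intble 0 t)
    (cont_gauss.stronglyMeasurableAtFilter _ _) cont_gauss.continuousAt).const_mul _

lemma Phi_pos {t : ℝ} (ht : 0 < t) : 0 < Phi t := by
  refine mul_pos (Real.sqrt_pos.2 (by positivity)) ?_
  exact intervalIntegral.intervalIntegral_pos_of_pos (intble 0 t) (fun x => Real.exp_pos _) ht

lemma Phi_le_one {t : ℝ} (ht : 0 ≤ t) : Phi t ≤ 1 := by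
  have hint : IntegrableOn (fun s : ℝ => Real.exp (-s ^ 2 / 2)) (Set.Ioi 0) := by
    have := (integrableOn_Ioi_exp_neg_mul_sq_iff (b := (1/2 : ℝ))).2 (by norm_num)
    refine this.congr_fun (fun x _ => by ring_nf) measurableSet_Ioi
  have key : (∫ s in (0:ℝ)..t, Real.exp (-s ^ 2 / 2)) ≤ Real.sqrt (2 * π) / 2 := by
    rw [intervalIntegral.integral_of_le ht]
    calc (∫ s in Set.Ioc (0:ℝ) t, Real.exp (-s ^ 2 / 2))
        ≤ ∫ s in Set.Ioi (0:ℝ), Real.exp (-s ^ 2 / 2) := by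
          refine setIntegral_mono_set hint ?_ ?_
          · filter_upwards with x using (Real.exp_pos _).le
          · exact HasSubset.Subset.eventuallyLE Set.Ioc_subset_Ioi_self
      _ = Real.sqrt (2 * π) / 2 := by
          rw [show (∫ s in Set.Ioi (0:ℝ), Real.exp (-s ^ 2 / 2))
              = ∫ s in Set.Ioi (0:ℝ), Real.exp (-(1/2) * s ^ 2) by
            apply setIntegral_congr_fun measurableSet_Ioi
            intro x _; ring_nf]
          rw [integral_gaussian_Ioi]
          rw [show π / (1/2) = 2 * π by ring]
  have h2 : Real.sqrt (2 / π) * (Real.sqrt (2 * π) / 2) = 1 := by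
    rw [← mul_div_assoc, ← Real.sqrt_mul (by positivity),
      show (2 / π) * (2 * π) = 4 by field_simp; ring,
      show (4:ℝ) = 2 ^ 2 by norm_num, Real.sqrt_sq (by norm_num)]
    norm_num
  calc Phi t ≤ Real.sqrt (2 / π) * (Real.sqrt (2 * π) / 2) := by
        exact mul_le_mul_of_nonneg_left key (Real.sqrt_nonneg _)
    _ = 1 := h2


def g (u : ℝ) : ℝ := Real.log (Phi u) - u * p u / (2 * Phi u)

lemma hasDerivAt_p (u : ℝ) : HasDerivAt p (-u * p u) u := by
  have h1 : HasDerivAt (fun u : ℝ => -u ^ 2 / 2) (-u) u := by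
    have := ((hasDerivAt_pow 2 u).neg).div_const 2
    refine this.congr_deriv ?_
    push_cast; ring
  have h2 := (h1.exp).const_mul (Real.sqrt (2 / π))
  refine h2.congr_deriv ?_
  unfold p; ring

lemma hasDerivAt_g {u : ℝ} (hu : 0 < u) :
    HasDerivAt g (p u * ((1 + u ^ 2) * Phi u + u * p u) / (2 * (Phi u) ^ 2)) u := by
  have hΦ := Phi_pos hu
  have h1 : HasDerivAt (fun u => Real.log (Phi u)) (p u / Phi u) u :=
    (hasDerivAt_Phi u).log hΦ.ne'
  have hnum : HasDerivAt (fun u => u * p u) (1 * p u + u * (-u * p u)) u :=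
    (hasDerivAt_id u).mul (hasDerivAt_p u)
  have hden : HasDerivAt (fun u => 2 * Phi u) (2 * p u) u := (hasDerivAt_Phi u).const_mul 2
  have h2 := hnum.div hden (by positivity)
  have h3 := h1.sub h2
  refine h3.congr_deriv ?_
  have hΦ' : Phi u ≠ 0 := hΦ.ne'
  field_simp
  ring

lemma g_mono : MonotoneOn g (Set.Ioi (0:ℝ)) := by
  have hderiv : ∀ x ∈ interior (Set.Ioi (0:ℝ)), 0 ≤ deriv g x := by
    rw [interior_Ioi]
    intro x hx
    rw [(hasDerivAt_g hx).deriv]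
    have hΦ := Phi_pos hx
    have hp := p_pos x
    have hx' : (0:ℝ) < x := hx
    apply div_nonneg _ (by positivity)
    apply mul_nonneg hp.le
    nlinarith [sq_nonneg x]
  apply monotoneOn_of_deriv_nonneg (convex_Ioi 0) ?_ ?_ hderiv
  · intro x hx
    exact (hasDerivAt_g hx).continuousAt.continuousWithinAt
  · rw [interior_Ioi]
    intro x hx
    exact (hasDerivAt_g hx).differentiableAt.differentiableWithinAt

def hfun (τ c : ℝ) : ℝ := c * Real.log (Phi (τ / Real.sqrt c))

lemma hasDerivAt_hfun {τ cc : ℝ} (hτ : 0 < τ) (hc : 0 < cc) :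
    HasDerivAt (hfun τ) (g (τ / Real.sqrt cc)) cc := by
  have hs : 0 < Real.sqrt cc := Real.sqrt_pos.2 hc
  have hu : 0 < τ / Real.sqrt cc := div_pos hτ hs
  have hΦ := Phi_pos hu
  have h1 : HasDerivAt Real.sqrt (1 / (2 * Real.sqrt cc)) cc := Real.hasDerivAt_sqrt hc.ne'
  have h2 : HasDerivAt (fun c => τ / Real.sqrt c)
      (τ * (-(1 / (2 * Real.sqrt cc)) / (Real.sqrt cc) ^ 2)) cc := by
    simpa [div_eq_mul_inv] using (h1.inv hs.ne').const_mul τ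
  have h3 : HasDerivAt (fun c => Real.log (Phi (τ / Real.sqrt c)))
      (p (τ / Real.sqrt cc) / Phi (τ / Real.sqrt cc) *
        (τ * (-(1 / (2 * Real.sqrt cc)) / (Real.sqrt cc) ^ 2))) cc := by
    have h := (((hasDerivAt_Phi (τ / Real.sqrt cc)).comp cc h2 :
      HasDerivAt (Phi ∘ fun c => τ / Real.sqrt c) _ cc)).log hΦ.ne'
    simp only [Function.comp_def] at h
    convert h using 1
    ring
  have h4 := (hasDerivAt_id cc).mul h3
  have key : g (τ / Real.sqrt cc) =
      1 * Real.log (Phi (τ / Real.sqrt cc)) + cc *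
        (p (τ / Real.sqrt cc) / Phi (τ / Real.sqrt cc) *
          (τ * (-(1 / (2 * Real.sqrt cc)) / (Real.sqrt cc) ^ 2))) := by
    set r := Real.sqrt cc with hr
    rw [show cc = r ^ 2 from (Real.sq_sqrt hc.le).symm]
    unfold g
    have hΦ' : Phi (τ / r) ≠ 0 := hΦ.ne'
    have hr0 : r ≠ 0 := hs.ne'
    field_simp
    ring
  exact key ▸ h4

lemma hfun_concave {τ : ℝ} (hτ : 0 < τ) : ConcaveOn ℝ (Set.Ioi 0) (hfun τ) := by
  have hanti : AntitoneOn (deriv (hfun τ)) (interior (Set.Ioi (0:ℝ))) := by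
    rw [interior_Ioi]
    intro a ha b hb hab
    rw [(hasDerivAt_hfun hτ ha).deriv, (hasDerivAt_hfun hτ hb).deriv]
    have hsa : 0 < Real.sqrt a := Real.sqrt_pos.2 ha
    have hsb : 0 < Real.sqrt b := Real.sqrt_pos.2 hb
    refine g_mono (div_pos hτ hsb) (div_pos hτ hsa) ?_
    exact div_le_div_of_nonneg_left hτ.le hsa (Real.sqrt_le_sqrt hab)
  refine hanti.concaveOn_of_deriv (convex_Ioi 0) ?_ ?_
  · intro x hx
    exact (hasDerivAt_hfun hτ hx).continuousAt.continuousWithinAt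
  · rw [interior_Ioi]
    intro x hx
    exact (hasDerivAt_hfun hτ hx).differentiableAt.differentiableWithinAt

end PG16

/-- subject to `0 < cᵢ ≤ 1` and `∑ cᵢ = j > 0`,
`∏ᵢ (√(2/π) ∫₀^{τ/√cᵢ} e^{-s²/2} ds)^{cᵢ} ≤ (√(2/π) ∫₀^{τ√(m/j)} e^{-s²/2} ds)^j`. -/
theorem product_gaussian_integrals_maximized_at_equal (m : ℕ) (hm : 1 ≤ m)
    (τ : ℝ) (hτ : 0 < τ) (c : Fin m → ℝ) (j : ℝ)
    (hc : ∀ i, 0 < c i ∧ c i ≤ 1) (hsum : ∑ i, c i = j) (hj : 0 < j) :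
    ∏ i, (Real.sqrt (2 / π) *
        ∫ s in (0 : ℝ)..(τ / Real.sqrt (c i)), Real.exp (-s ^ 2 / 2)) ^ (c i) ≤
      (Real.sqrt (2 / π) *
        ∫ s in (0 : ℝ)..(τ * Real.sqrt ((m : ℝ) / j)), Real.exp (-s ^ 2 / 2)) ^ j := by
  have hm' : (0:ℝ) < (m:ℝ) := by exact_mod_cast Nat.lt_of_lt_of_le Nat.zero_lt_one hm
  have hjm : (0:ℝ) < j / m := div_pos hj hm'
  show ∏ i, PG16.Phi (τ / Real.sqrt (c i)) ^ (c i) ≤ PG16.Phi (τ * Real.sqrt ((m:ℝ)/j)) ^ j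
  have hT : τ * Real.sqrt ((m:ℝ)/j) = τ / Real.sqrt (j/m) := by
    rw [show ((m:ℝ)/j) = (j/(m:ℝ))⁻¹ from (inv_div j (m:ℝ)).symm, Real.sqrt_inv,
      ← div_eq_mul_inv]
  rw [hT]
  -- Jensen
  have hw0 : ∀ i : Fin m, i ∈ Finset.univ → (0:ℝ) ≤ (m:ℝ)⁻¹ := fun i _ => by positivity
  have hw1 : ∑ _i : Fin m, (m:ℝ)⁻¹ = 1 := by
    rw [Finset.sum_const, Finset.card_univ, Fintype.card_fin, nsmul_eq_mul]
    field_simp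
  have hmem : ∀ i : Fin m, i ∈ Finset.univ → c i ∈ Set.Ioi (0:ℝ) := fun i _ => (hc i).1
  have jensen := (PG16.hfun_concave hτ).le_map_sum hw0 hw1 hmem
  simp only [smul_eq_mul] at jensen
  have hsum' : ∑ i, (m:ℝ)⁻¹ * c i = j / m := by
    rw [← Finset.mul_sum, hsum]
    rw [div_eq_mul_inv, mul_comm]
  rw [hsum'] at jensen
  have key : ∑ i, PG16.hfun τ (c i) ≤ (m:ℝ) * PG16.hfun τ (j/m) := by
    have h2 := mul_le_mul_of_nonneg_left jensen hm'.le
    calc ∑ i, PG16.hfun τ (c i)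
        = (m:ℝ) * ∑ i, (m:ℝ)⁻¹ * PG16.hfun τ (c i) := by
          rw [Finset.mul_sum]
          exact Finset.sum_congr rfl fun i _ => by field_simp
      _ ≤ (m:ℝ) * PG16.hfun τ (j/m) := h2
  have hbase : ∀ i, 0 < PG16.Phi (τ / Real.sqrt (c i)) :=
    fun i => PG16.Phi_pos (div_pos hτ (Real.sqrt_pos.2 (hc i).1))
  have hbase' : 0 < PG16.Phi (τ / Real.sqrt (j/m)) :=
    PG16.Phi_pos (div_pos hτ (Real.sqrt_pos.2 hjm))
  calc ∏ i, PG16.Phi (τ / Real.sqrt (c i)) ^ (c i)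
      = Real.exp (∑ i, PG16.hfun τ (c i)) := by
        rw [Real.exp_sum]
        refine Finset.prod_congr rfl fun i _ => ?_
        rw [PG16.hfun, Real.rpow_def_of_pos (hbase i), mul_comm]
    _ ≤ Real.exp ((m:ℝ) * PG16.hfun τ (j/m)) := Real.exp_le_exp.2 key
    _ = PG16.Phi (τ / Real.sqrt (j/m)) ^ j := by
        rw [Real.rpow_def_of_pos hbase', PG16.hfun]
        congr 1
        field_simp
end
end
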